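/- arXiv:2405.04712 — 2 statements merged into one kernel-verified Lean document; each statement's English description precedes it below -/
import Mathlib

section
/- Let (X,Ω) be a pair with Ω ⊆ ℝ^N measurable of finite measure, let V_{X,Ω}(ε) := m(X_ε ∩ Ω) be the relative tube function, and for δ > 0 define the tube zeta function ζ̃_{X,Ω}(s;δ) := ∫₀^δ t^{s-N-1} V_{X,Ω}(t) dt. If φ is a similitude of ℝ^N with scaling ratio λ > 0, then for all s in the common domain of convergence, ζ̃_{φ(X),φ(Ω)}(s;δ) = λ^s · ζ̃_{X,Ω}(s; δ/λ). -/
open Set MeasureTheory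

/-- Open ε-neighborhood of a set `X ⊆ ℝ^N`. -/
def nbhd {N : ℕ} (X : Set (EuclideanSpace ℝ (Fin N))) (ε : ℝ) :
    Set (EuclideanSpace ℝ (Fin N)) :=
  {y | ∃ x ∈ X, ‖y - x‖ < ε}

/-- The relative tube function `V_{X,Ω}(ε) = m(X_ε ∩ Ω)`, as a real number. -/
noncomputable def tubeFun {N : ℕ} (X Ω : Set (EuclideanSpace ℝ (Fin N))) (ε : ℝ) : ℝ :=
  (volume (nbhd X ε ∩ Ω)).toReal

/-- The relative tube zeta function `ζ̃_{X,Ω}(s;δ) = ∫₀^δ t^{s-N-1} V_{X,Ω}(t) dt`. -/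
noncomputable def tubeZeta {N : ℕ} (X Ω : Set (EuclideanSpace ℝ (Fin N))) (s : ℂ) (δ : ℝ) : ℂ :=
  ∫ t in Ioo (0 : ℝ) δ, (t : ℂ) ^ (s - N - 1) * (tubeFun X Ω t : ℂ)

section Aux
open scoped RealInnerProductSpace
variable {N : ℕ}

lemma similitude_affine (φ : EuclideanSpace ℝ (Fin N) → EuclideanSpace ℝ (Fin N))
    (lam : ℝ) (hlam : 0 < lam)
    (hφ : ∀ x y, dist (φ x) (φ y) = lam * dist x y) :
    ∃ L : EuclideanSpace ℝ (Fin N) ≃ₗᵢ[ℝ] EuclideanSpace ℝ (Fin N),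
      ∀ x, φ x = lam • L x + φ 0 := by
  set ψ : EuclideanSpace ℝ (Fin N) → EuclideanSpace ℝ (Fin N) :=
    fun x => lam⁻¹ • (φ x - φ 0) with hψ
  have hnorm : ∀ x y, ‖ψ x - ψ y‖ = ‖x - y‖ := by
    intro x y
    have h := hφ x y
    rw [dist_eq_norm, dist_eq_norm] at h
    have : ψ x - ψ y = lam⁻¹ • (φ x - φ y) := by
      rw [hψ]; simp only [← smul_sub]; congr 1; abel
    rw [this, norm_smul, h, Real.norm_eq_abs, abs_of_pos (inv_pos.2 hlam), ← mul_assoc,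
      inv_mul_cancel₀ hlam.ne', one_mul]
  have hψ0 : ψ 0 = 0 := by simp [hψ]
  have hnx : ∀ x, ‖ψ x‖ = ‖x‖ := by
    intro x
    simpa [hψ0] using hnorm x 0
  have hinner : ∀ x y, ⟪ψ x, ψ y⟫ = ⟪x, y⟫ := by
    intro x y
    rw [real_inner_eq_norm_mul_self_add_norm_mul_self_sub_norm_sub_mul_self_div_two,
      real_inner_eq_norm_mul_self_add_norm_mul_self_sub_norm_sub_mul_self_div_two (x := x),
      hnx, hnx, hnorm]
  have hadd : ∀ x y, ψ (x + y) = ψ x + ψ y := by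
    intro x y
    have h0 : ‖ψ (x + y) - (ψ x + ψ y)‖ ^ 2 = 0 := by
      rw [← real_inner_self_eq_norm_sq]
      simp only [inner_sub_left, inner_sub_right, inner_add_left, inner_add_right, hinner]
      ring
    have := pow_eq_zero_iff (n := 2) (by norm_num) |>.1 h0
    rwa [norm_eq_zero, sub_eq_zero] at this
  have hsmul : ∀ (c : ℝ) x, ψ (c • x) = c • ψ x := by
    intro c x
    have h0 : ‖ψ (c • x) - c • ψ x‖ ^ 2 = 0 := by
      rw [← real_inner_self_eq_norm_sq]
      simp only [inner_sub_left, inner_sub_right, real_inner_smul_left, real_inner_smul_right,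
        hinner]
      ring
    have := pow_eq_zero_iff (n := 2) (by norm_num) |>.1 h0
    rwa [norm_eq_zero, sub_eq_zero] at this
  let L0 : EuclideanSpace ℝ (Fin N) →ₗ[ℝ] EuclideanSpace ℝ (Fin N) :=
    { toFun := ψ, map_add' := hadd, map_smul' := hsmul }
  let Li : EuclideanSpace ℝ (Fin N) →ₗᵢ[ℝ] EuclideanSpace ℝ (Fin N) := ⟨L0, hnx⟩
  refine ⟨Li.toLinearIsometryEquiv rfl, fun x => ?_⟩
  have hLi : (Li.toLinearIsometryEquiv rfl) x = ψ x := by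
    simp [Li, L0]
  rw [hLi, hψ]
  simp only [smul_smul, mul_inv_cancel₀ hlam.ne', one_smul]
  abel

lemma vol_image (L : EuclideanSpace ℝ (Fin N) ≃ₗᵢ[ℝ] EuclideanSpace ℝ (Fin N))
    (lam : ℝ) (hlam : 0 < lam) (c : EuclideanSpace ℝ (Fin N))
    (S : Set (EuclideanSpace ℝ (Fin N))) :
    volume ((fun x => lam • L x + c) '' S) = ENNReal.ofReal (lam ^ N) * volume S := by
  have h1 : (fun x => lam • L x + c) '' S = (fun y => y + c) '' ((lam • ·) '' (L '' S)) := by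
    simp [image_image]
  have h2 : volume ((L : EuclideanSpace ℝ (Fin N) → EuclideanSpace ℝ (Fin N)) '' S)
      = volume S := by
    have himg : (L : EuclideanSpace ℝ (Fin N) → EuclideanSpace ℝ (Fin N)) '' S
        = L.symm ⁻¹' S := by
      ext y; simp [Set.mem_image, Set.mem_preimage]
      constructor
      · rintro ⟨x, hx, rfl⟩; simpa using hx
      · intro h; exact ⟨L.symm y, h, by simp⟩
    rw [himg]
    exact (L.symm.measurePreserving).measure_preimage_emb
      L.symm.toHomeomorph.measurableEmbedding S
  rw [h1, image_add_right, measure_preimage_add_right, Set.image_smul,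
    Measure.addHaar_smul_of_nonneg volume hlam.le, finrank_euclideanSpace_fin, h2]

end Aux

/-- Scaling property of the tube zeta function under a similitude of ratio `λ`:
`ζ̃_{φ(X),φ(Ω)}(s;δ) = λ^s · ζ̃_{X,Ω}(s;δ/λ)`. -/
theorem tubeZeta_scaling {N : ℕ}
    (φ : EuclideanSpace ℝ (Fin N) → EuclideanSpace ℝ (Fin N)) (lam : ℝ) (hlam : 0 < lam)
    (hφ : ∀ x y, dist (φ x) (φ y) = lam * dist x y)
    (X Ω : Set (EuclideanSpace ℝ (Fin N))) (hΩ : MeasurableSet Ω) (hΩfin : volume Ω ≠ ⊤)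
    (δ : ℝ) (hδ : 0 < δ) (s : ℂ)
    (h1 : IntegrableOn (fun t : ℝ => (t : ℂ) ^ (s - N - 1) * (tubeFun (φ '' X) (φ '' Ω) t : ℂ))
      (Ioo (0 : ℝ) δ))
    (h2 : IntegrableOn (fun t : ℝ => (t : ℂ) ^ (s - N - 1) * (tubeFun X Ω t : ℂ))
      (Ioo (0 : ℝ) (δ / lam))) :
    tubeZeta (φ '' X) (φ '' Ω) s δ = (lam : ℂ) ^ s * tubeZeta X Ω s (δ / lam) := by
  obtain ⟨L, hL⟩ := similitude_affine φ lam hlam hφ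
  -- set identity for neighborhoods
  have hset : ∀ ε : ℝ, nbhd (φ '' X) ε ∩ φ '' Ω = φ '' (nbhd X (ε / lam) ∩ Ω) := by
    intro ε
    ext y
    constructor
    · rintro ⟨⟨x', ⟨x, hx, rfl⟩, hlt⟩, ⟨ω, hω, rfl⟩⟩
      have hd : ‖φ ω - φ x‖ = lam * ‖ω - x‖ := by
        rw [← dist_eq_norm, ← dist_eq_norm, hφ]
      refine ⟨ω, ⟨⟨x, hx, ?_⟩, hω⟩, rfl⟩
      rw [lt_div_iff₀ hlam]
      calc ‖ω - x‖ * lam = lam * ‖ω - x‖ := mul_comm _ _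
        _ = ‖φ ω - φ x‖ := hd.symm
        _ < ε := hlt
    · rintro ⟨ω, ⟨⟨x, hx, hlt⟩, hω⟩, rfl⟩
      have hd : ‖φ ω - φ x‖ = lam * ‖ω - x‖ := by
        rw [← dist_eq_norm, ← dist_eq_norm, hφ]
      refine ⟨⟨φ x, ⟨x, hx, rfl⟩, ?_⟩, ⟨ω, hω, rfl⟩⟩
      rw [hd]
      calc lam * ‖ω - x‖ < lam * (ε / lam) := by
            exact (mul_lt_mul_iff_right₀ hlam).2 hlt
        _ = ε := by field_simp
  have hV : ∀ ε : ℝ, tubeFun (φ '' X) (φ '' Ω) ε = lam ^ N * tubeFun X Ω (ε / lam) := by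
    intro ε
    unfold tubeFun
    rw [hset ε]
    have : φ '' (nbhd X (ε / lam) ∩ Ω)
        = (fun x => lam • L x + φ 0) '' (nbhd X (ε / lam) ∩ Ω) := by
      apply Set.image_congr'
      intro x; exact hL x
    rw [this, vol_image L lam hlam, ENNReal.toReal_mul, ENNReal.toReal_ofReal (by positivity)]
  -- now the integral computation
  have hlamC : (lam : ℂ) ≠ 0 := by exact_mod_cast hlam.ne'
  set g : ℝ → ℂ := fun u =>
    ((lam * u : ℝ) : ℂ) ^ (s - N - 1) * ((lam : ℂ) ^ (N : ℕ)) * (tubeFun X Ω u : ℂ) with hg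
  have hfun : (fun t : ℝ => (t : ℂ) ^ (s - N - 1) * (tubeFun (φ '' X) (φ '' Ω) t : ℂ))
      = fun t => g (t / lam) := by
    funext t
    rw [hg]
    simp only
    have hc : lam * (t / lam) = t := by field_simp
    rw [hc, hV t]
    push_cast
    ring
  have step1 : tubeZeta (φ '' X) (φ '' Ω) s δ = lam • ∫ u in (0:ℝ)..(δ / lam), g u := by
    unfold tubeZeta
    rw [← integral_Ioc_eq_integral_Ioo, ← intervalIntegral.integral_of_le hδ.le, hfun,
      intervalIntegral.integral_comp_div g hlam.ne', zero_div]
  have step2 : ∫ u in (0:ℝ)..(δ / lam), g u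
      = (lam : ℂ) ^ (s - N - 1) * (lam : ℂ) ^ (N : ℕ) * tubeZeta X Ω s (δ / lam) := by
    have hδl : 0 < δ / lam := div_pos hδ hlam
    rw [intervalIntegral.integral_of_le hδl.le, integral_Ioc_eq_integral_Ioo]
    unfold tubeZeta
    rw [← MeasureTheory.integral_const_mul]
    apply setIntegral_congr_fun measurableSet_Ioo
    intro u hu
    rw [hg]
    simp only
    rw [Complex.ofReal_mul, Complex.mul_cpow_ofReal_nonneg hlam.le hu.1.le]
    ring
  rw [step1, step2, Complex.real_smul]
  have hpow : (lam : ℂ) * ((lam : ℂ) ^ (s - N - 1) * (lam : ℂ) ^ (N : ℕ)) = (lam : ℂ) ^ s := by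
    have he : s - (N : ℂ) - 1 + (N : ℂ) = s - 1 := by ring
    rw [← Complex.cpow_natCast (lam : ℂ) N, ← Complex.cpow_add _ _ hlamC, he,
      Complex.cpow_sub _ _ hlamC, Complex.cpow_one]
    field_simp
  rw [← mul_assoc, ← mul_assoc, ← hpow]
  ring
end

section
/- Let (X,Ω) be a relative fractal drum in ℝ^N whose tube function satisfies V_{X,Ω}(ε) = Σ_{i=1}^m a_i λ_i^N V_{X,Ω}(ε/λ_i) + R(ε) with distinct λ_i ∈ (0,1), positive integer multiplicities a_i, and continuous remainder R(ε) = O(ε^{N−r}) as ε → 0⁺ for some r ∈ ℝ. Then the tube zeta function ζ̃_{X,Ω}(s;δ) admits a meromorphic continuation to the half-plane {Re(s) > r}, and every pole ω of ζ̃_{X,Ω} with Re(ω) > r satisfies 1 = Σ_{i=1}^m a_i λ_i^ω. -/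
/-!
Substituting the scaling functional equation into `ζ̃(s) = ∫₀^δ t^(s-N-1) V(t) dt` and rescaling
`t ↦ λᵢ t` in each term gives, for `Re s > N`,
`(1 - Σ aᵢ λᵢ^s) ζ̃(s) = Σ aᵢ λᵢ^s ∫_δ^{δ/λᵢ} t^(s-N-1) V(t) dt + ∫₀^δ t^(s-N-1) R(t) dt`.
The sum on the right is entire. Solving the equation for `R` shows that `R` is bounded and
measurable on `(0, δ]`, so with `R(t) = O(t^(N-r))` its integral is holomorphic for `Re s > r`.
Dividing by the entire, not identically zero function `1 - Σ aᵢ λᵢ^s` therefore continues `ζ̃`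
meromorphically to `Re s > r`, with poles only at its zeros.
-/

open Set MeasureTheory

open Filter Topology Asymptotics

section Mellin

variable {E : Type*} [NormedAddCommGroup E] [NormedSpace ℂ E] {f : ℝ → E} {b : ℝ} {s : ℂ}

theorem mellinConvergent_of_eventually_zero_atTop (hfc : LocallyIntegrableOn f (Ioi 0))
    (hf_top : f =ᶠ[atTop] 0) (hf_bot : f =O[𝓝[>] 0] (· ^ (-b))) (hs : b < s.re) :
    MellinConvergent f s :=
  mellinConvergent_of_isBigO_rpow hfc (hf_top.trans_isBigO (isBigO_zero _ _)) (lt_add_one s.re)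
    hf_bot hs

theorem mellin_differentiableAt_of_eventually_zero_atTop (hfc : LocallyIntegrableOn f (Ioi 0))
    (hf_top : f =ᶠ[atTop] 0) (hf_bot : f =O[𝓝[>] 0] (· ^ (-b))) (hs : b < s.re) :
    DifferentiableAt ℂ (mellin f) s :=
  mellin_differentiableAt_of_isBigO_rpow hfc (hf_top.trans_isBigO (isBigO_zero _ _))
    (lt_add_one s.re) hf_bot hs

theorem hasMellin_sum {ι : Type*} (u : Finset ι) {f : ι → ℝ → E}
    (hf : ∀ i ∈ u, MellinConvergent (f i) s) :
    HasMellin (fun t => ∑ i ∈ u, f i t) s (∑ i ∈ u, mellin (f i) s) :=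
  ⟨by simpa only [MellinConvergent, IntegrableOn, Finset.smul_sum] using integrable_finsetSum u hf,
    by simpa only [mellin, Finset.smul_sum] using integral_finsetSum u hf⟩

theorem MellinConvergent.comp_div {c : ℝ} (hf : MellinConvergent f s) (hc : 0 < c) :
    MellinConvergent (fun t => f (t / c)) s := by
  simpa only [div_eq_inv_mul] using (MellinConvergent.comp_mul_left (inv_pos.2 hc)).2 hf

theorem mellin_comp_div (f : ℝ → E) (s : ℂ) {c : ℝ} (hc : 0 < c) :
    mellin (fun t => f (t / c)) s = (c : ℂ) ^ s • mellin f s := by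
  simp_rw [div_eq_inv_mul]
  rw [mellin_comp_mul_left f s (inv_pos.2 hc), Complex.ofReal_inv,
    Complex.inv_cpow _ _ (by simp [Complex.arg_ofReal_of_nonneg hc.le, Real.pi_ne_zero.symm]),
    Complex.cpow_neg, inv_inv]

end Mellin

noncomputable def cutoff (V : ℝ → ℝ) (a b : ℝ) : ℝ → ℂ :=
  (Ioc a b).indicator fun t => (V t : ℂ)

section Cutoff

variable {V : ℝ → ℝ} {a b c M : ℝ} {s : ℂ}

theorem cutoff_add_cutoff (hab : a ≤ b) (hbc : b ≤ c) :
    cutoff V a b + cutoff V b c = cutoff V a c := by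
  rw [cutoff, cutoff, cutoff, ← Ioc_union_Ioc_eq_Ioc hab hbc,
    indicator_union_of_disjoint (Ioc_disjoint_Ioc_of_le le_rfl)]
  rfl

theorem norm_cutoff_le (t : ℝ) : ‖cutoff V a b t‖ ≤ |V t| :=
  norm_indicator_le_norm_self _ t |>.trans_eq (Complex.norm_real _)

theorem cutoff_eventually_zero_atTop : cutoff V a b =ᶠ[atTop] 0 := by
  filter_upwards [eventually_gt_atTop b] with t ht
  exact indicator_of_notMem (fun h => h.2.not_gt ht) _

theorem cutoff_eventually_zero_nhdsGT (ha : 0 < a) : cutoff V a b =ᶠ[𝓝[>] 0] 0 := by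
  filter_upwards [Ioo_mem_nhdsGT ha] with t ht
  exact indicator_of_notMem (fun h => h.1.not_gt ht.2) _

theorem mellin_cutoff (ha : 0 ≤ a) (s : ℂ) :
    mellin (cutoff V a b) s = ∫ t in Ioc a b, (t : ℂ) ^ (s - 1) * V t := by
  have hsub : Ioc a b ⊆ Ioi 0 := fun t ht => ha.trans_lt ht.1
  rw [mellin, ← inter_eq_right.2 hsub, ← setIntegral_indicator measurableSet_Ioc]
  simp only [cutoff, indicator_mul_right, smul_eq_mul]

variable (hV : AEStronglyMeasurable V) (hVM : ∀ t, |V t| ≤ M)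
include hV hVM

theorem integrable_cutoff : Integrable (cutoff V a b) :=
  (IntegrableOn.of_bound measure_Ioc_lt_top
    (Complex.continuous_ofReal.comp_aestronglyMeasurable hV).restrict M
    (Eventually.of_forall fun t => (Complex.norm_real _).trans_le (hVM t))).integrable_indicator
    measurableSet_Ioc

theorem mellinConvergent_cutoff (hs : 0 < s.re) : MellinConvergent (cutoff V a b) s := by
  refine mellinConvergent_of_eventually_zero_atTop (b := 0)
    ((integrable_cutoff hV hVM).locallyIntegrable.locallyIntegrableOn _)
    cutoff_eventually_zero_atTop
    (IsBigO.of_bound M (Eventually.of_forall fun t => ?_)) hs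
  rw [neg_zero, Real.rpow_zero, norm_one, mul_one]
  exact (norm_cutoff_le t).trans (hVM t)

theorem differentiable_mellin_cutoff (ha : 0 < a) : Differentiable ℂ (mellin (cutoff V a b)) :=
  fun s => mellin_differentiableAt_of_eventually_zero_atTop (b := s.re - 1)
    ((integrable_cutoff hV hVM).locallyIntegrable.locallyIntegrableOn _)
    cutoff_eventually_zero_atTop
    ((cutoff_eventually_zero_nhdsGT ha).trans_isBigO (isBigO_zero _ _)) (sub_one_lt _)

end Cutoff

section Moran

variable {ι : Type*} [Fintype ι] {a lam : ι → ℝ}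

/-- `1 / ζ_L(s)` in the paper's notation. -/
noncomputable def moranFun (a lam : ι → ℝ) (s : ℂ) : ℂ :=
  1 - ∑ i, (a i : ℂ) * (lam i : ℂ) ^ s

theorem differentiable_moranFun (hlam : ∀ i, lam i ≠ 0) : Differentiable ℂ (moranFun a lam) :=
  (differentiable_const 1).sub <| Differentiable.fun_sum fun i _ => (differentiable_const _).mul
    (differentiable_id.const_cpow (Or.inl (Complex.ofReal_ne_zero.2 (hlam i))))

theorem exists_moranFun_ne_zero (hlam : ∀ i, |lam i| < 1) : ∃ s, moranFun a lam s ≠ 0 := by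
  have h : Tendsto (fun n : ℕ => ∑ i, (a i : ℂ) * (lam i : ℂ) ^ n) atTop (𝓝 0) := by
    simpa using tendsto_finsetSum Finset.univ fun i _ =>
      (tendsto_pow_atTop_nhds_zero_of_norm_lt_one
        (by rw [Complex.norm_real, Real.norm_eq_abs]; exact hlam i)).const_mul (a i : ℂ)
  obtain ⟨n, hn⟩ := (h.eventually_ne zero_ne_one).exists
  refine ⟨n, ?_⟩
  rw [moranFun, sub_ne_zero]
  simpa using hn.symm

end Moran

theorem exists_meromorphicOn_eqOn_of_mul_eq {U S : Set ℂ} {f P D : ℂ → ℂ}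
    (hP : AnalyticOnNhd ℂ P U) (hD : Differentiable ℂ D) (hD0 : ∃ z, D z ≠ 0)
    (hf : ∀ s ∈ S, D s * f s = P s) :
    ∃ Z : ℂ → ℂ, MeromorphicOn Z U ∧ EqOn Z f S ∧ ∀ ω ∈ U, ¬ AnalyticAt ℂ Z ω → D ω = 0 := by
  classical
  have hD_isolated : ∀ z, ∀ᶠ w in 𝓝[≠] z, D w ≠ 0 := fun z =>
    (hD.analyticAt z).eventually_eq_zero_or_eventually_ne_zero.resolve_left fun h => by
      obtain ⟨w, hw⟩ := hD0
      exact hw (AnalyticOnNhd.eqOn_zero_of_preconnected_of_eventuallyEq_zero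
        (fun z _ => hD.analyticAt z) isPreconnected_univ (mem_univ z) h (mem_univ w))
  -- The zeros of `D` are isolated, so the value chosen there does not affect meromorphy;
  -- choosing `f` keeps `Z = f` on all of `S`.
  refine ⟨fun z => if D z = 0 then f z else P z / D z, fun x hx => ?_, fun s hs => ?_,
    fun ω hω hZ => ?_⟩
  · refine ((hP x hx).meromorphicAt.div (hD.analyticAt x).meromorphicAt).congr ?_
    filter_upwards [hD_isolated x] with z hz
    simp [hz]
  · by_cases h : D s = 0
    · simp [h]
    · simp [h, ← hf s hs]
  · by_contra h
    refine hZ (((hP ω hω).div (hD.analyticAt ω) h).congr ?_)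
    filter_upwards [(hD.analyticAt ω).continuousAt.eventually_ne h] with z hz
    simp [hz]

section ScalingEquation

variable {ι : Type*} [Fintype ι] {N : ℕ} {V R : ℝ → ℝ} {M r δ : ℝ} {a lam : ι → ℝ} {s : ℂ}

/-- `E(s;δ) + ζ̃_R(s;δ)` in the paper's notation. -/
noncomputable def scalingNumerator (N : ℕ) (a lam : ι → ℝ) (V R : ℝ → ℝ) (δ : ℝ) (s : ℂ) : ℂ :=
  ∑ i, (a i : ℂ) * (lam i : ℂ) ^ s * mellin (cutoff V δ (δ / lam i)) (s - N) +
    mellin (cutoff R 0 δ) (s - N)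

theorem cutoff_remainder_eq (hlam : ∀ i, 0 < lam i)
    (hSFE : ∀ ε, 0 < ε → V ε = ∑ i, a i * lam i ^ N * V (ε / lam i) + R ε) :
    cutoff R 0 δ = fun t => cutoff V 0 δ t -
      ∑ i, ((a i * lam i ^ N : ℝ) : ℂ) * cutoff V 0 (δ / lam i) (t / lam i) := by
  funext t
  have hmem : ∀ i, t / lam i ∈ Ioc 0 (δ / lam i) ↔ t ∈ Ioc 0 δ := fun i => by
    simp only [mem_Ioc, div_pos_iff_of_pos_right (hlam i), div_le_div_iff_of_pos_right (hlam i)]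
  by_cases ht : t ∈ Ioc 0 δ
  · have hV : ∀ i, cutoff V 0 (δ / lam i) (t / lam i) = V (t / lam i) := fun i =>
      indicator_of_mem ((hmem i).2 ht) _
    simp only [hV]
    simp only [cutoff, indicator_of_mem ht, hSFE t ht.1]
    push_cast
    ring
  · have hV : ∀ i, cutoff V 0 (δ / lam i) (t / lam i) = 0 := fun i =>
      indicator_of_notMem (mt (hmem i).1 ht) _
    simp only [hV, mul_zero, Finset.sum_const_zero, sub_zero]
    simp only [cutoff, indicator_of_notMem ht]

variable (hV : AEStronglyMeasurable V) (hVM : ∀ t, |V t| ≤ M)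
  (hSFE : ∀ ε, 0 < ε → V ε = ∑ i, a i * lam i ^ N * V (ε / lam i) + R ε)
include hV hVM hSFE

theorem integrable_cutoff_remainder (hlam : ∀ i, 0 < lam i) : Integrable (cutoff R 0 δ) := by
  rw [cutoff_remainder_eq hlam hSFE]
  exact (integrable_cutoff hV hVM).sub (integrable_finsetSum _ fun i _ =>
    ((integrable_cutoff hV hVM).comp_div (hlam i).ne').const_mul _)

theorem mellin_cutoff_remainder (hlam : ∀ i, 0 < lam i) (hs : 0 < s.re) :
    mellin (cutoff R 0 δ) s = mellin (cutoff V 0 δ) s -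
      ∑ i, ((a i * lam i ^ N : ℝ) : ℂ) * ((lam i : ℂ) ^ s * mellin (cutoff V 0 (δ / lam i)) s) := by
  have hconv : ∀ i, MellinConvergent (fun t => ((a i * lam i ^ N : ℝ) : ℂ) *
      cutoff V 0 (δ / lam i) (t / lam i)) s := fun i =>
    ((mellinConvergent_cutoff hV hVM hs).comp_div (hlam i)).const_smul (𝕜 := ℂ) _
  rw [cutoff_remainder_eq hlam hSFE,
    (hasMellin_sub (mellinConvergent_cutoff hV hVM hs) (hasMellin_sum _ fun i _ => hconv i).1).2,
    (hasMellin_sum _ fun i _ => hconv i).2]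
  congr 1
  refine Finset.sum_congr rfl fun i _ => ?_
  have h := mellin_const_smul (fun t => cutoff V 0 (δ / lam i) (t / lam i)) s
    ((a i * lam i ^ N : ℝ) : ℂ)
  rwa [mellin_comp_div _ _ (hlam i)] at h

theorem moranFun_mul_mellin_cutoff (hlam : ∀ i, lam i ∈ Ioo 0 1) (hδ : 0 ≤ δ)
    (hs : (N : ℝ) < s.re) :
    moranFun a lam s * mellin (cutoff V 0 δ) (s - N) = scalingNumerator N a lam V R δ s := by
  have hz : 0 < (s - N).re := by simpa using hs
  have hsplit : ∀ i, mellin (cutoff V 0 (δ / lam i)) (s - N) =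
      mellin (cutoff V 0 δ) (s - N) + mellin (cutoff V δ (δ / lam i)) (s - N) := fun i => by
    rw [← cutoff_add_cutoff hδ (le_div_self hδ (hlam i).1 (hlam i).2.le)]
    exact (hasMellin_add (mellinConvergent_cutoff hV hVM hz) (mellinConvergent_cutoff hV hVM hz)).2
  have hpow : ∀ i (x : ℂ), ((a i * lam i ^ N : ℝ) : ℂ) * ((lam i : ℂ) ^ (s - N) * x) =
      (a i : ℂ) * (lam i : ℂ) ^ s * x := fun i x => by
    have hne : (lam i : ℂ) ≠ 0 := Complex.ofReal_ne_zero.2 (hlam i).1.ne'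
    rw [Complex.cpow_sub _ _ hne, Complex.cpow_natCast]
    push_cast
    field_simp
  have h := mellin_cutoff_remainder (δ := δ) hV hVM hSFE (fun i => (hlam i).1) hz
  simp only [hsplit, hpow] at h
  rw [scalingNumerator, h, moranFun]
  simp only [mul_add, Finset.sum_add_distrib, ← Finset.sum_mul]
  ring

theorem differentiableAt_scalingNumerator (hlam : ∀ i, lam i ∈ Ioo 0 1) (hδ : 0 < δ)
    (hR : R =O[𝓝[>] 0] (· ^ ((N : ℝ) - r))) (hs : r < s.re) :
    DifferentiableAt ℂ (scalingNumerator N a lam V R δ) s := by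
  have hRbot : cutoff R 0 δ =O[𝓝[>] 0] (· ^ (-(r - N))) := by
    simpa only [neg_sub] using (isBigO_of_le _ fun t =>
      (norm_cutoff_le t).trans_eq (Real.norm_eq_abs _).symm).trans hR
  have hRint := integrable_cutoff_remainder (δ := δ) hV hVM hSFE fun i => (hlam i).1
  have hRmellin : DifferentiableAt ℂ (mellin (cutoff R 0 δ)) (s - N) :=
    mellin_differentiableAt_of_eventually_zero_atTop (hRint.locallyIntegrable.locallyIntegrableOn _)
      cutoff_eventually_zero_atTop hRbot (by simpa using hs)
  have hshift : ∀ {g : ℂ → ℂ}, DifferentiableAt ℂ g (s - N) →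
      DifferentiableAt ℂ (fun z => g (z - N)) s := fun hg =>
    hg.comp s (differentiableAt_id.sub_const _)
  refine .add (.fun_sum fun i _ => .mul ?_ (hshift (differentiable_mellin_cutoff hV hVM hδ _)))
    (hshift hRmellin)
  exact (differentiableAt_const _).mul
    (differentiableAt_id.const_cpow (Or.inl (Complex.ofReal_ne_zero.2 (hlam i).1.ne')))

theorem exists_meromorphicOn_tubeZeta_of_scaling (hlam : ∀ i, lam i ∈ Ioo 0 1) (hδ : 0 < δ)
    (hR : R =O[𝓝[>] 0] (· ^ ((N : ℝ) - r))) :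
    ∃ Z : ℂ → ℂ, MeromorphicOn Z {s | r < s.re} ∧
      (∀ s : ℂ, (N : ℝ) < s.re → Z s = ∫ t in Ioo 0 δ, (t : ℂ) ^ (s - N - 1) * V t) ∧
      ∀ ω : ℂ, r < ω.re → ¬ AnalyticAt ℂ Z ω → 1 = ∑ i, (a i : ℂ) * (lam i : ℂ) ^ ω := by
  have hnum : AnalyticOnNhd ℂ (scalingNumerator N a lam V R δ) {s | r < s.re} :=
    DifferentiableOn.analyticOnNhd (fun s hs =>
      (differentiableAt_scalingNumerator hV hVM hSFE hlam hδ hR hs).differentiableWithinAt)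
      (isOpen_lt continuous_const Complex.continuous_re)
  obtain ⟨Z, hZ, hZf, hpole⟩ := exists_meromorphicOn_eqOn_of_mul_eq hnum
    (differentiable_moranFun fun i => (hlam i).1.ne')
    (exists_moranFun_ne_zero fun i => abs_lt.2 ⟨by linarith [(hlam i).1], (hlam i).2⟩)
    (S := {s | (N : ℝ) < s.re}) (f := fun s => ∫ t in Ioo 0 δ, (t : ℂ) ^ (s - N - 1) * V t)
    fun s hs => by
      rw [← integral_Ioc_eq_integral_Ioo, ← mellin_cutoff le_rfl,
        moranFun_mul_mellin_cutoff hV hVM hSFE hlam hδ.le hs]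
  exact ⟨Z, hZ, fun s hs => hZf hs, fun ω hω hZω => sub_eq_zero.1 (hpole ω hω hZω)⟩

end ScalingEquation

section TubeFun

variable {N : ℕ} {X Ω : Set (EuclideanSpace ℝ (Fin N))}

theorem tubeFun_mono (hΩ : volume Ω ≠ ⊤) : Monotone (tubeFun X Ω) := fun _ _ h =>
  ENNReal.toReal_mono (measure_ne_top_of_subset inter_subset_right hΩ)
    (measure_mono (inter_subset_inter_left _ fun _ ⟨x, hx, hxy⟩ => ⟨x, hx, hxy.trans_le h⟩))

theorem abs_tubeFun_le (hΩ : volume Ω ≠ ⊤) (ε : ℝ) : |tubeFun X Ω ε| ≤ (volume Ω).toReal := by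
  rw [tubeFun, abs_of_nonneg ENNReal.toReal_nonneg]
  exact ENNReal.toReal_mono hΩ (measure_mono inter_subset_right)

end TubeFun

theorem complexDimensions_from_SFE_general {N : ℕ} (m : ℕ)
    (X Ω : Set (EuclideanSpace ℝ (Fin N)))
    (hΩfin : volume Ω ≠ ⊤)
    (lam : Fin m → ℝ) (hlam : ∀ i, lam i ∈ Ioo (0 : ℝ) 1)
    (a : Fin m → ℕ)
    (R : ℝ → ℝ) (r : ℝ)
    (hO : ∃ C > (0 : ℝ), ∃ η > (0 : ℝ), ∀ ε : ℝ, 0 < ε → ε < η → |R ε| ≤ C * ε ^ ((N : ℝ) - r))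
    (hSFE : ∀ ε : ℝ, 0 < ε →
      tubeFun X Ω ε = ∑ i, (a i : ℝ) * lam i ^ N * tubeFun X Ω (ε / lam i) + R ε)
    (δ : ℝ) (hδ : 0 < δ) :
    ∃ Z : ℂ → ℂ,
      MeromorphicOn Z {s : ℂ | r < s.re} ∧
      (∀ s : ℂ, (N : ℝ) < s.re →
        Z s = ∫ t in Ioo (0 : ℝ) δ, (t : ℂ) ^ (s - N - 1) * (tubeFun X Ω t : ℂ)) ∧
      (∀ ω : ℂ, r < ω.re → ¬ AnalyticAt ℂ Z ω →
        (1 : ℂ) = ∑ i, (a i : ℂ) * (lam i : ℂ) ^ ω) := by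
  have hR : R =O[𝓝[>] 0] (· ^ ((N : ℝ) - r)) := by
    obtain ⟨C, -, η, hη, hRC⟩ := hO
    refine IsBigO.of_bound C ?_
    filter_upwards [Ioo_mem_nhdsGT hη] with t ht
    rw [Real.norm_eq_abs, Real.norm_eq_abs, abs_of_nonneg (Real.rpow_nonneg ht.1.le _)]
    exact hRC t ht.1 ht.2
  obtain ⟨Z, hZ, hZζ, hpole⟩ := exists_meromorphicOn_tubeZeta_of_scaling
    (tubeFun_mono hΩfin).measurable.aestronglyMeasurable (abs_tubeFun_le hΩfin) hSFE hlam hδ hR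
  exact ⟨Z, hZ, hZζ, fun ω hω hZω => by simpa using hpole ω hω hZω⟩

/-- Complex dimensions from scaling functional equations: if the tube function of the
relative fractal drum `(X,Ω)` satisfies
`V_{X,Ω}(ε) = Σ aᵢ λᵢ^N V_{X,Ω}(ε/λᵢ) + R(ε)` with `R(ε) = O(ε^{N−r})`, then the
tube zeta function `ζ̃_{X,Ω}(·;δ)` has a meromorphic continuation `Z` to the
half-plane `{Re(s) > r}`, and every pole `ω` there satisfies the complexified Moran
equation `1 = Σ aᵢ λᵢ^ω`. -/
theorem complexDimensions_from_SFE {N : ℕ} (m : ℕ) (hm : 1 ≤ m)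
    (X Ω : Set (EuclideanSpace ℝ (Fin N)))
    (hΩopen : IsOpen Ω) (hΩfin : volume Ω ≠ ⊤) (hRFD : ∃ δ > (0 : ℝ), X ⊆ nbhd Ω δ)
    (lam : Fin m → ℝ) (hlam : ∀ i, lam i ∈ Ioo (0 : ℝ) 1) (hdist : Function.Injective lam)
    (a : Fin m → ℕ) (ha : ∀ i, 0 < a i)
    (R : ℝ → ℝ) (hRcont : ContinuousOn R (Ioi 0)) (r : ℝ)
    (hO : ∃ C > (0 : ℝ), ∃ η > (0 : ℝ), ∀ ε : ℝ, 0 < ε → ε < η → |R ε| ≤ C * ε ^ ((N : ℝ) - r))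
    (hSFE : ∀ ε : ℝ, 0 < ε →
      tubeFun X Ω ε = ∑ i, (a i : ℝ) * lam i ^ N * tubeFun X Ω (ε / lam i) + R ε)
    (δ : ℝ) (hδ : 0 < δ) :
    ∃ Z : ℂ → ℂ,
      MeromorphicOn Z {s : ℂ | r < s.re} ∧
      (∀ s : ℂ, (N : ℝ) < s.re →
        Z s = ∫ t in Ioo (0 : ℝ) δ, (t : ℂ) ^ (s - N - 1) * (tubeFun X Ω t : ℂ)) ∧
      (∀ ω : ℂ, r < ω.re → ¬ AnalyticAt ℂ Z ω →
        (1 : ℂ) = ∑ i, (a i : ℂ) * (lam i : ℂ) ^ ω) :=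
  complexDimensions_from_SFE_general m X Ω hΩfin lam hlam a R r hO hSFE δ hδ
end
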